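/- arXiv:1911.10491 — 3 statements merged into one kernel-verified Lean document; each statement's English description precedes it below -/
import Mathlib

section
/- For any odd prime p, ∑_{k=0}^{p-1} ((-1)^k / 8^k) · ∑_{j=0}^{k} C(2j,j)·C(2k-2j,k-j)·(6j+1)·(6k-6j+1) ≡ 0 (mod p), i.e., the rational number given by this double sum has p-adic valuation at least 1. -/
/-!
Writing `c j = C(2j, j)`, the recurrence `(j+1) c (j+1) = 2(2j+1) c j` together with the
symmetry `j ↔ k - j` of the convolution gives `∑ c j c (k-j) = 4^k` and
`8 ∑ j (k-j) c j c (k-j) = k(k-1) 4^k`, so the inner sum is `4^k (9k² + 3k + 2) / 2`.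
The outer sum then telescopes to `(-1/2)^p (p - 3p²)`, which is divisible by `p` since `2` is a `p`-adic unit.
-/

open Finset
open Nat (centralBinom succ_mul_centralBinom_succ)

lemma sum_antidiagonal_succ_fst_mul_centralBinom (g : ℕ → ℕ) (k : ℕ) :
    ∑ x ∈ antidiagonal (k + 1), x.1 * centralBinom x.1 * g x.2
      = ∑ x ∈ antidiagonal k, 2 * (2 * x.1 + 1) * centralBinom x.1 * g x.2 := by
  simp [Nat.sum_antidiagonal_succ, succ_mul_centralBinom_succ]

lemma two_mul_sum_antidiagonal_fst_mul_centralBinom_mul_centralBinom (k : ℕ) :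
    2 * ∑ x ∈ antidiagonal k, x.1 * centralBinom x.1 * centralBinom x.2
      = k * ∑ x ∈ antidiagonal k, centralBinom x.1 * centralBinom x.2 := by
  conv_lhs => rw [two_mul]; arg 2; rw [← Nat.sum_antidiagonal_swap]
  rw [← sum_add_distrib, mul_sum]
  refine sum_congr rfl fun x hx => ?_
  rw [← mem_antidiagonal.mp hx, Prod.fst_swap, Prod.snd_swap]
  ring

lemma sum_antidiagonal_centralBinom_mul_centralBinom (k : ℕ) :
    ∑ x ∈ antidiagonal k, centralBinom x.1 * centralBinom x.2 = 4 ^ k := by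
  induction k with
  | zero => simp
  | succ k ih =>
    have hsym := two_mul_sum_antidiagonal_fst_mul_centralBinom_mul_centralBinom k
    rw [ih] at hsym
    refine Nat.eq_of_mul_eq_mul_left k.succ_pos ?_
    calc (k + 1) * ∑ x ∈ antidiagonal (k + 1), centralBinom x.1 * centralBinom x.2
        = 2 * ∑ x ∈ antidiagonal (k + 1), x.1 * centralBinom x.1 * centralBinom x.2 :=
          (two_mul_sum_antidiagonal_fst_mul_centralBinom_mul_centralBinom _).symm
      _ = 2 * ∑ x ∈ antidiagonal k, 2 * (2 * x.1 + 1) * centralBinom x.1 * centralBinom x.2 := by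
          rw [sum_antidiagonal_succ_fst_mul_centralBinom]
      _ = 4 * (2 * ∑ x ∈ antidiagonal k, x.1 * centralBinom x.1 * centralBinom x.2)
            + 4 * ∑ x ∈ antidiagonal k, centralBinom x.1 * centralBinom x.2 := by
          simp only [mul_sum, ← sum_add_distrib]
          exact sum_congr rfl fun x _ => by ring
      _ = (k + 1) * 4 ^ (k + 1) := by rw [hsym, ih]; ring

lemma eight_mul_sum_antidiagonal_fst_mul_snd_mul_centralBinom_mul_centralBinom (k : ℕ) :
    8 * ∑ x ∈ antidiagonal k, x.1 * x.2 * centralBinom x.1 * centralBinom x.2 + k * 4 ^ k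
      = k ^ 2 * 4 ^ k := by
  induction k with
  | zero => simp
  | succ k ih =>
    have hsnd : 2 * ∑ x ∈ antidiagonal k, x.2 * centralBinom x.1 * centralBinom x.2 = k * 4 ^ k := by
      rw [← sum_antidiagonal_centralBinom_mul_centralBinom,
        ← two_mul_sum_antidiagonal_fst_mul_centralBinom_mul_centralBinom, ← Nat.sum_antidiagonal_swap]
      simp only [Prod.fst_swap, Prod.snd_swap, mul_right_comm]
    have hstep : ∑ x ∈ antidiagonal (k + 1), x.1 * x.2 * centralBinom x.1 * centralBinom x.2
        = 4 * ∑ x ∈ antidiagonal k, x.1 * x.2 * centralBinom x.1 * centralBinom x.2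
          + 2 * ∑ x ∈ antidiagonal k, x.2 * centralBinom x.1 * centralBinom x.2 := by
      have := sum_antidiagonal_succ_fst_mul_centralBinom (fun j => j * centralBinom j) k
      simp only [mul_sum, ← sum_add_distrib]
      convert this using 2 <;> ring
    rw [hstep, hsnd, pow_succ]
    linear_combination 4 * ih

lemma two_mul_sum_range_choose_mul_six_mul_add_one (k : ℕ) :
    2 * ∑ j ∈ range (k + 1), (2 * j).choose j * (2 * (k - j)).choose (k - j)
        * (6 * j + 1) * (6 * (k - j) + 1) = 4 ^ k * (9 * k ^ 2 + 3 * k + 2) := by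
  simp only [← Nat.centralBinom_eq_two_mul_choose]
  rw [← Nat.sum_antidiagonal_eq_sum_range_succ
    (fun i j => centralBinom i * centralBinom j * (6 * i + 1) * (6 * j + 1)) k]
  have hexpand : ∀ x ∈ antidiagonal k,
      centralBinom x.1 * centralBinom x.2 * (6 * x.1 + 1) * (6 * x.2 + 1)
        = 36 * (x.1 * x.2 * centralBinom x.1 * centralBinom x.2)
          + (6 * k + 1) * (centralBinom x.1 * centralBinom x.2) := by
    intro x hx
    rw [← mem_antidiagonal.mp hx]
    ring
  rw [sum_congr rfl hexpand, sum_add_distrib, ← mul_sum, ← mul_sum,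
    sum_antidiagonal_centralBinom_mul_centralBinom]
  linear_combination 9 * eight_mul_sum_antidiagonal_fst_mul_snd_mul_centralBinom_mul_centralBinom k

lemma sum_range_neg_one_pow_div_eight_pow_mul {K : Type*} [Field K] [NeZero (2 : K)] (n : ℕ) :
    ∑ k ∈ range n, (-1) ^ k / 8 ^ k * (4 ^ k * (9 * k ^ 2 + 3 * k + 2) / 2 : K)
      = (-1 / 2) ^ n * (n - 3 * n ^ 2) := by
  induction n with
  | zero => simp
  | succ n ih =>
    have h4 : (4 : K) ≠ 0 := by simpa [show (4 : K) = 2 * 2 by norm_num] using two_ne_zero (α := K)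
    rw [sum_range_succ, ih, show (8 : K) = 2 * 4 by norm_num]
    simp only [div_pow, mul_pow]
    push_cast
    field_simp
    ring

theorem stmt2 (p : ℕ) [Fact p.Prime] (hodd : Odd p) :
    ‖∑ k ∈ range p, ((-1) ^ k / 8 ^ k : ℚ_[p]) *
        ∑ j ∈ range (k + 1),
          (((2 * j).choose j : ℚ_[p]) * ((2 * (k - j)).choose (k - j) : ℚ_[p]) *
            ((6 * j + 1 : ℕ) : ℚ_[p]) * ((6 * (k - j) + 1 : ℕ) : ℚ_[p]))‖
      ≤ (p : ℝ)⁻¹ := by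
  have hinner (k : ℕ) : ∑ j ∈ range (k + 1),
      (((2 * j).choose j : ℚ_[p]) * ((2 * (k - j)).choose (k - j) : ℚ_[p]) *
        ((6 * j + 1 : ℕ) : ℚ_[p]) * ((6 * (k - j) + 1 : ℕ) : ℚ_[p]))
        = 4 ^ k * (9 * k ^ 2 + 3 * k + 2) / 2 := by
    rw [eq_div_iff two_ne_zero, mul_comm]
    exact_mod_cast two_mul_sum_range_choose_mul_six_mul_add_one k
  have hnorm_two : ‖(2 : ℚ_[p])‖ = 1 := by
    exact_mod_cast Padic.norm_natCast_eq_one_iff.mpr (Nat.coprime_two_left.mpr hodd).symm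
  have hnorm_le : ‖(1 - 3 * p : ℚ_[p])‖ ≤ 1 := by
    exact_mod_cast Padic.norm_int_le_one (1 - 3 * p)
  simp only [hinner, sum_range_neg_one_pow_div_eight_pow_mul]
  rw [show (p - 3 * p ^ 2 : ℚ_[p]) = p * (1 - 3 * p) by ring, norm_mul, norm_mul, norm_pow,
    norm_div, norm_neg, norm_one, hnorm_two, div_one, one_pow, one_mul, Padic.norm_p]
  exact mul_le_of_le_one_right (by positivity) hnorm_le
end

section
/- For any odd prime p, ∑_{k=0}^{p-1} (1 / 4^k) · ∑_{j=0}^{k} C(2j,j)·C(2k-2j,k-j)·(6j+1)·(6k-6j+1) ≡ 0 (mod p). -/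
/-!
Write `cᵢ = C(2i, i)`. The recurrence `(i + 1) cᵢ₊₁ = 2 (2i + 1) cᵢ` together with the symmetry
`i ↔ j` turns the convolutions `∑_{i+j=n} w(i, j) cᵢ cⱼ` with weights `w = 1, i, ij` into
recurrences in `n`, whose solutions are `4ⁿ`, `n 4ⁿ / 2` and `C(n, 2) 4ⁿ / 4`. Since
`(6i + 1)(6j + 1) = 36ij + 6n + 1` on `i + j = n`, the inner sum is `4ᵏ (9 C(k, 2) + 6k + 1)`,
so the double sum is the integer `∑_{k<p} (9 C(k, 2) + 6k + 1) = p (3 C(p, 2) + 1)`.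
-/

open Finset Finset.Nat

namespace Nat

theorem choose_two_add_one (n : ℕ) : (n + 1).choose 2 = n.choose 2 + n := by
  rw [choose_succ_succ', choose_one_right, add_comm]

def centralBinomConv (w : ℕ → ℕ → ℕ) (n : ℕ) : ℕ :=
  ∑ ij ∈ antidiagonal n, w ij.1 ij.2 * (centralBinom ij.1 * centralBinom ij.2)

section Weights

variable {w v : ℕ → ℕ → ℕ} {n : ℕ}

theorem centralBinomConv_congr (h : ∀ i j, i + j = n → w i j = v i j) :
    centralBinomConv w n = centralBinomConv v n :=
  sum_congr rfl fun ij hij => by rw [h ij.1 ij.2 (mem_antidiagonal.mp hij)]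

theorem centralBinomConv_add :
    centralBinomConv (fun i j => w i j + v i j) n
      = centralBinomConv w n + centralBinomConv v n := by
  simp only [centralBinomConv, add_mul, sum_add_distrib]

theorem centralBinomConv_const_mul (c : ℕ) :
    centralBinomConv (fun i j => c * w i j) n = c * centralBinomConv w n := by
  simp only [centralBinomConv, mul_sum, mul_assoc]

theorem centralBinomConv_swap : centralBinomConv (fun i j => w j i) n = centralBinomConv w n := by
  rw [centralBinomConv, ← sum_antidiagonal_swap]
  exact sum_congr rfl fun ij _ => by
    simp only [Prod.fst_swap, Prod.snd_swap, mul_comm (centralBinom ij.2)]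

end Weights

theorem centralBinomConv_fst_mul_succ (w : ℕ → ℕ → ℕ) (n : ℕ) :
    centralBinomConv (fun i j => i * w i j) (n + 1)
      = 2 * centralBinomConv (fun i j => (2 * i + 1) * w (i + 1) j) n := by
  rw [centralBinomConv, sum_antidiagonal_succ, zero_mul, zero_mul, zero_add, centralBinomConv,
    mul_sum]
  refine sum_congr rfl fun ij _ => ?_
  calc (ij.1 + 1) * w (ij.1 + 1) ij.2 * (centralBinom (ij.1 + 1) * centralBinom ij.2)
      = (ij.1 + 1) * centralBinom (ij.1 + 1) * (w (ij.1 + 1) ij.2 * centralBinom ij.2) := by ring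
    _ = _ := by rw [succ_mul_centralBinom_succ]; ring

theorem centralBinomConv_affine_mul_affine (a n : ℕ) :
    centralBinomConv (fun i j => (a * i + 1) * (a * j + 1)) n
      = a ^ 2 * centralBinomConv (fun i j => i * j) n
        + (a * n + 1) * centralBinomConv (fun _ _ => 1) n := by
  rw [← centralBinomConv_const_mul, ← centralBinomConv_const_mul, ← centralBinomConv_add]
  exact centralBinomConv_congr fun i j h => by subst h; ring

theorem two_mul_centralBinomConv_fst (n : ℕ) :
    2 * centralBinomConv (fun i _ => i) n = n * centralBinomConv (fun _ _ => 1) n := by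
  calc 2 * centralBinomConv (fun i _ => i) n
      = centralBinomConv (fun i _ => i) n + centralBinomConv (fun _ j => j) n := by
        rw [two_mul, centralBinomConv_swap (w := fun i _ => i)]
    _ = centralBinomConv (fun _ _ => n * 1) n := by
        rw [← centralBinomConv_add]
        exact centralBinomConv_congr fun i j h => by rw [h, mul_one]
    _ = n * centralBinomConv (fun _ _ => 1) n := centralBinomConv_const_mul n

theorem centralBinomConv_fst_succ (n : ℕ) :
    centralBinomConv (fun i _ => i) (n + 1)
      = 4 * centralBinomConv (fun i _ => i) n + 2 * centralBinomConv (fun _ _ => 1) n := by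
  have hshift := centralBinomConv_fst_mul_succ (fun _ _ => 1) n
  simp only [mul_one] at hshift
  rw [hshift, centralBinomConv_add (w := fun i _ => 2 * i),
    centralBinomConv_const_mul (w := fun i _ => i)]
  ring

theorem centralBinomConv_one (n : ℕ) : centralBinomConv (fun _ _ => 1) n = 4 ^ n := by
  induction n with
  | zero => simp [centralBinomConv]
  | succ n ih =>
    have h := two_mul_centralBinomConv_fst (n + 1)
    rw [centralBinomConv_fst_succ, mul_add, ← mul_assoc, mul_comm 2 4, mul_assoc,
      two_mul_centralBinomConv_fst, ih] at h
    apply Nat.eq_of_mul_eq_mul_left (by omega : 0 < n + 1)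
    rw [← h, pow_succ]
    ring

theorem four_mul_centralBinomConv_fst_mul_snd (n : ℕ) :
    4 * centralBinomConv (fun i j => i * j) n = n.choose 2 * 4 ^ n := by
  induction n using Nat.twoStepInduction with
  | zero => simp [centralBinomConv]
  | one => simp [centralBinomConv, antidiagonal_succ]
  | more n ih _ =>
    have hshift : centralBinomConv (fun i j => i * j) (n + 2)
        = 4 * centralBinomConv (fun i j => (2 * i + 1) * (2 * j + 1)) n := by
      rw [centralBinomConv_fst_mul_succ (fun _ j => j), ← centralBinomConv_swap,
        centralBinomConv_congr fun i j _ => mul_comm (2 * j + 1) i,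
        centralBinomConv_fst_mul_succ (fun _ j => 2 * j + 1)]
      ring
    have hchoose : (n + 2).choose 2 = n.choose 2 + (2 * n + 1) := by
      rw [choose_two_add_one, choose_two_add_one]
      ring
    rw [hshift, centralBinomConv_affine_mul_affine, centralBinomConv_one, hchoose, pow_add]
    linear_combination 16 * ih

theorem sum_range_choose_mul_choose_mul_six_add_one (k : ℕ) :
    ∑ j ∈ range (k + 1), (2 * j).choose j * (2 * (k - j)).choose (k - j)
        * (6 * j + 1) * (6 * (k - j) + 1) = 4 ^ k * (9 * k.choose 2 + 6 * k + 1) := by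
  have hconv : ∑ j ∈ range (k + 1), (2 * j).choose j * (2 * (k - j)).choose (k - j)
        * (6 * j + 1) * (6 * (k - j) + 1)
      = centralBinomConv (fun i j => (6 * i + 1) * (6 * j + 1)) k := by
    rw [centralBinomConv, sum_antidiagonal_eq_sum_range_succ
      (fun i j => (6 * i + 1) * (6 * j + 1) * (centralBinom i * centralBinom j))]
    refine sum_congr rfl fun j _ => ?_
    simp only [centralBinom_eq_two_mul_choose]
    ring
  rw [hconv, centralBinomConv_affine_mul_affine, centralBinomConv_one]
  linear_combination 9 * four_mul_centralBinomConv_fst_mul_snd k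

theorem sum_range_nine_mul_choose_two (n : ℕ) :
    ∑ k ∈ range n, (9 * k.choose 2 + 6 * k + 1) = n * (3 * n.choose 2 + 1) := by
  induction n with
  | zero => simp
  | succ n ih =>
    have htwo : 2 * (n.choose 2 + n) = (n + 1) * n := by
      have := add_one_mul_choose_eq n 1
      rw [choose_one_right, choose_two_add_one] at this
      linarith
    rw [sum_range_succ, ih, choose_two_add_one]
    linear_combination 3 * htwo

end Nat

theorem stmt3_general (p : ℕ) [Fact p.Prime] :
    ‖∑ k ∈ range p, (1 / 4 ^ k : ℚ_[p]) *
        ∑ j ∈ range (k + 1),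
          (((2 * j).choose j : ℚ_[p]) * ((2 * (k - j)).choose (k - j) : ℚ_[p]) *
            ((6 * j + 1 : ℕ) : ℚ_[p]) * ((6 * (k - j) + 1 : ℕ) : ℚ_[p]))‖
      ≤ (p : ℝ)⁻¹ := by
  have hinner (k : ℕ) : ∑ j ∈ range (k + 1),
      (((2 * j).choose j : ℚ_[p]) * ((2 * (k - j)).choose (k - j) : ℚ_[p]) *
        ((6 * j + 1 : ℕ) : ℚ_[p]) * ((6 * (k - j) + 1 : ℕ) : ℚ_[p]))
      = (4 : ℚ_[p]) ^ k * ((9 * k.choose 2 + 6 * k + 1 : ℕ) : ℚ_[p]) := by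
    exact_mod_cast
      congrArg (Nat.cast (R := ℚ_[p])) (Nat.sum_range_choose_mul_choose_mul_six_add_one k)
  have hfour : (4 : ℚ_[p]) ≠ 0 := by norm_num
  simp only [hinner, one_div, inv_mul_cancel_left₀ (pow_ne_zero _ hfour)]
  rw [← Nat.cast_sum, Nat.sum_range_nine_mul_choose_two, Nat.cast_mul, norm_mul, Padic.norm_p]
  exact mul_le_of_le_one_right (by positivity)
    (by simpa using Padic.norm_int_le_one (p := p) (3 * p.choose 2 + 1))

theorem stmt3 (p : ℕ) [Fact p.Prime] (hodd : Odd p) :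
    ‖∑ k ∈ range p, (1 / 4 ^ k : ℚ_[p]) *
        ∑ j ∈ range (k + 1),
          (((2 * j).choose j : ℚ_[p]) * ((2 * (k - j)).choose (k - j) : ℚ_[p]) *
            ((6 * j + 1 : ℕ) : ℚ_[p]) * ((6 * (k - j) + 1 : ℕ) : ℚ_[p]))‖
      ≤ (p : ℝ)⁻¹ :=
  stmt3_general p
end

section
/- For any odd prime p, ∑_{k=0}^{p-1} (1/4^k) · ∑_{j=0}^{k} C(2j,j)·C(2k-2j,k-j)·(6j+1)·(6k-6j+1) ≡ p (mod p²). -/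
open Finset

/-!
With `c j = (2j).choose j`, the recursion `(j + 1) c (j + 1) = 2 (2j + 1) c j` turns the
convolution moments `∑_{i+j=n} c i c j`, `∑_{i+j=n} i c i c j` and `∑_{i+j=n} i j c i c j` into
first-order recurrences, whose solutions are `4ⁿ`, `n 4ⁿ / 2` and `n (n - 1) 4ⁿ / 8`. Hence the
`k`-th inner sum is `4ᵏ (9k² + 3k + 2) / 2`, the whole sum is `p (3p² - 3p + 2) / 2`, and
subtracting `p` leaves `3p² (p - 1) / 2`, a multiple of `p²` since `p` is odd.
-/

namespace Nat

local notation "c" => centralBinom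

lemma sum_antidiagonal_fst_mul_centralBinom_succ (f : ℕ → ℕ) (n : ℕ) :
    ∑ ij ∈ antidiagonal (n + 1), ij.1 * f ij.2 * (c ij.1 * c ij.2) =
      4 * ∑ ij ∈ antidiagonal n, ij.1 * f ij.2 * (c ij.1 * c ij.2) +
        2 * ∑ ij ∈ antidiagonal n, f ij.2 * (c ij.1 * c ij.2) := by
  rw [Finset.Nat.sum_antidiagonal_succ, zero_mul, zero_mul, zero_add, mul_sum, mul_sum,
    ← sum_add_distrib]
  refine sum_congr rfl fun ij _ => ?_
  linear_combination f ij.2 * c ij.2 * succ_mul_centralBinom_succ ij.1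

lemma sum_antidiagonal_snd_mul_centralBinom (n : ℕ) :
    ∑ ij ∈ antidiagonal n, ij.2 * (c ij.1 * c ij.2) =
      ∑ ij ∈ antidiagonal n, ij.1 * (c ij.1 * c ij.2) := by
  rw [← Finset.Nat.sum_antidiagonal_swap]
  simp only [Prod.fst_swap, Prod.snd_swap, mul_comm (c _) (c _)]

lemma two_mul_sum_antidiagonal_fst_mul_centralBinom_eq_mul_sum (n : ℕ) :
    2 * ∑ ij ∈ antidiagonal n, ij.1 * (c ij.1 * c ij.2) =
      n * ∑ ij ∈ antidiagonal n, c ij.1 * c ij.2 := by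
  rw [two_mul]
  nth_rw 2 [← sum_antidiagonal_snd_mul_centralBinom]
  rw [← sum_add_distrib, mul_sum]
  refine sum_congr rfl fun ij hij => ?_
  rw [← add_mul, mem_antidiagonal.mp hij]

lemma sum_antidiagonal_centralBinom_mul_centralBinom (n : ℕ) :
    ∑ ij ∈ antidiagonal n, c ij.1 * c ij.2 = 4 ^ n := by
  induction n with
  | zero => simp
  | succ n ih =>
    have shift := sum_antidiagonal_fst_mul_centralBinom_succ (fun _ => 1) n
    simp only [mul_one, one_mul] at shift
    refine mul_left_cancel₀ (add_one_ne_zero n) ?_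
    rw [← two_mul_sum_antidiagonal_fst_mul_centralBinom_eq_mul_sum, shift]
    linear_combination
      4 * two_mul_sum_antidiagonal_fst_mul_centralBinom_eq_mul_sum n + (4 * n + 4) * ih

lemma two_mul_sum_antidiagonal_fst_mul_centralBinom (n : ℕ) :
    2 * ∑ ij ∈ antidiagonal n, ij.1 * (c ij.1 * c ij.2) = n * 4 ^ n := by
  rw [two_mul_sum_antidiagonal_fst_mul_centralBinom_eq_mul_sum,
    sum_antidiagonal_centralBinom_mul_centralBinom]

lemma eight_mul_sum_antidiagonal_fst_mul_snd_mul_centralBinom (n : ℕ) :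
    8 * ∑ ij ∈ antidiagonal n, ij.1 * ij.2 * (c ij.1 * c ij.2) + n * 4 ^ n = n ^ 2 * 4 ^ n := by
  induction n with
  | zero => simp
  | succ n ih =>
    have shift := sum_antidiagonal_fst_mul_centralBinom_succ (fun j => j) n
    beta_reduce at shift
    rw [shift, sum_antidiagonal_snd_mul_centralBinom]
    linear_combination 4 * ih + 8 * two_mul_sum_antidiagonal_fst_mul_centralBinom n

lemma two_mul_sum_range_choose_mul_choose_mul_six_mul_add_one (n : ℕ) :
    2 * ∑ j ∈ range (n + 1), (2 * j).choose j * (2 * (n - j)).choose (n - j) *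
        (6 * j + 1) * (6 * (n - j) + 1) = 4 ^ n * (9 * n ^ 2 + 3 * n + 2) := by
  rw [← Finset.Nat.sum_antidiagonal_eq_sum_range_succ
    (fun i j => (2 * i).choose i * (2 * j).choose j * (6 * i + 1) * (6 * j + 1))]
  simp only [← centralBinom_eq_two_mul_choose]
  have split : ∑ ij ∈ antidiagonal n, c ij.1 * c ij.2 * (6 * ij.1 + 1) * (6 * ij.2 + 1) =
      36 * ∑ ij ∈ antidiagonal n, ij.1 * ij.2 * (c ij.1 * c ij.2) +
        6 * ∑ ij ∈ antidiagonal n, ij.1 * (c ij.1 * c ij.2) +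
        6 * ∑ ij ∈ antidiagonal n, ij.2 * (c ij.1 * c ij.2) +
        ∑ ij ∈ antidiagonal n, c ij.1 * c ij.2 := by
    simp only [mul_sum, ← sum_add_distrib]
    exact sum_congr rfl fun ij _ => by ring
  rw [split, sum_antidiagonal_snd_mul_centralBinom, sum_antidiagonal_centralBinom_mul_centralBinom]
  linear_combination 9 * eight_mul_sum_antidiagonal_fst_mul_snd_mul_centralBinom n +
    12 * two_mul_sum_antidiagonal_fst_mul_centralBinom n

end Nat

lemma one_div_four_pow_mul_sum_range_choose {K : Type*} [Field K] [NeZero (2 : K)] (k : ℕ) :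
    (1 / 4 ^ k : K) *
        ∑ j ∈ range (k + 1), ((2 * j).choose j : K) * ((2 * (k - j)).choose (k - j) : K) *
          ((6 * j + 1 : ℕ) : K) * ((6 * (k - j) + 1 : ℕ) : K) =
      (9 * k ^ 2 + 3 * k + 2) / 2 := by
  have h4 : (4 : K) ≠ 0 := by
    rw [← two_add_two_eq_four, ← two_mul]
    exact mul_ne_zero two_ne_zero two_ne_zero
  have h := congrArg (Nat.cast : ℕ → K)
    (Nat.two_mul_sum_range_choose_mul_choose_mul_six_mul_add_one k)
  push_cast at h ⊢
  field_simp
  linear_combination h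

lemma sum_range_nine_mul_sq_add_three_mul_add_two {R : Type*} [CommRing R] (n : ℕ) :
    ∑ k ∈ range n, (9 * (k : R) ^ 2 + 3 * k + 2) = (n : R) * (3 * n ^ 2 - 3 * n + 2) := by
  induction n with
  | zero => simp
  | succ n ih =>
    rw [sum_range_succ, ih]
    push_cast
    ring

theorem stmt17 (p : ℕ) [Fact p.Prime] (hodd : Odd p) :
    ‖(∑ k ∈ range p, (1 / 4 ^ k : ℚ_[p]) *
        ∑ j ∈ range (k + 1),
          (((2 * j).choose j : ℚ_[p]) * ((2 * (k - j)).choose (k - j) : ℚ_[p]) *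
            ((6 * j + 1 : ℕ) : ℚ_[p]) * ((6 * (k - j) + 1 : ℕ) : ℚ_[p]))) -
      (p : ℚ_[p])‖ ≤ ((p : ℝ) ^ 2)⁻¹ := by
  obtain ⟨m, hm⟩ := hodd
  have closed_form_sub_p : (p : ℚ_[p]) * (3 * p ^ 2 - 3 * p + 2) / 2 - p = p ^ 2 * (3 * m : ℕ) := by
    rw [show (p : ℚ_[p]) = 2 * m + 1 by exact_mod_cast hm]
    push_cast
    ring
  rw [sum_congr rfl fun k _ => one_div_four_pow_mul_sum_range_choose k, ← sum_div,
    sum_range_nine_mul_sq_add_three_mul_add_two, closed_form_sub_p, norm_mul, norm_pow, Padic.norm_p, inv_pow]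
  exact mul_le_of_le_one_right (by positivity) (IsUltrametricDist.norm_natCast_le_one _ _)
end
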